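/- Assume 0 < ra < 1/(2s₂), and assume the points x_i (defined by x₀ = 1/2 + ra, x₁ = (s₂+2rs₂a)(1/2 + 1/(2s₂) − x₀), x_{i+1} = (s₁+2rs₁a)(x_i − 1/2 + 1/(2s₁)) for i ≥ 1) satisfy x_i ∈ [1/2 − 1/(2s₁), 1/2) for i = 1, …, m−1 and x_m = 1/2 − 1/(2s₁). Then for every x ∈ I₀: (i) for each 1 ≤ i ≤ m−1, τ₂(x) ∈ I_i if and only if x ∈ I_{i+1}; (ii) τ₂(x) ∈ I_m; and (iii) for each 1 ≤ i ≤ m, τ₃(x) ∈ I_i if and only if x ∈ I₁. -/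
import Mathlib


/-- The orbit of the point 1/2 + ra under the perturbed W-shaped map W_a. -/
noncomputable def orbitW (s₁ s₂ r a : ℝ) : ℕ → ℝ
  | 0 => 1 / 2 + r * a
  | 1 => (s₂ + 2 * r * s₂ * a) * (1 / 2 + 1 / (2 * s₂) - (1 / 2 + r * a))
  | (n + 2) => (s₁ + 2 * r * s₁ * a) * (orbitW s₁ s₂ r a (n + 1) - 1 / 2 + 1 / (2 * s₁))

/-- The interval I_i = [x_i, 1/2 + ra]. -/
noncomputable def Iint (s₁ s₂ r a : ℝ) (i : ℕ) : Set ℝ :=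
  Set.Icc (orbitW s₁ s₂ r a i) (1 / 2 + r * a)

set_option maxHeartbeats 1000000 in
theorem stmt_6 (s₁ s₂ r a : ℝ) (hs₁ : 1 < s₁) (hs₂ : 1 < s₂)
    (hsum : 1 / s₁ + 1 / s₂ = 1) (hr : 0 < r) (ha : 0 < a)
    (hra : r * a < 1 / (2 * s₂)) (m : ℕ) (hm : 1 ≤ m)
    (horbit : ∀ i : ℕ, 1 ≤ i → i ≤ m - 1 →
      orbitW s₁ s₂ r a i ∈ Set.Ico (1 / 2 - 1 / (2 * s₁)) (1 / 2))
    (horbitm : orbitW s₁ s₂ r a m = 1 / 2 - 1 / (2 * s₁)) :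
    ∀ x ∈ Set.Icc (0 : ℝ) (1 / 2 + r * a),
      (∀ i : ℕ, 1 ≤ i → i ≤ m - 1 →
        (x / (s₁ + 2 * r * s₁ * a) + 1 / 2 - 1 / (2 * s₁) ∈ Iint s₁ s₂ r a i ↔
          x ∈ Iint s₁ s₂ r a (i + 1))) ∧
      (x / (s₁ + 2 * r * s₁ * a) + 1 / 2 - 1 / (2 * s₁) ∈ Iint s₁ s₂ r a m) ∧
      (∀ i : ℕ, 1 ≤ i → i ≤ m →
        (1 / 2 + 1 / (2 * s₂) - x / (s₂ + 2 * r * s₂ * a) ∈ Iint s₁ s₂ r a i ↔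
          x ∈ Iint s₁ s₂ r a 1)) := by
  intro x hx
  obtain ⟨hx0, hx1⟩ := hx
  have hs₁0 : (0:ℝ) < s₁ := by linarith
  have hs₂0 : (0:ℝ) < s₂ := by linarith
  have hra0 : 0 < r * a := mul_pos hr ha
  have hc₁ : (0:ℝ) < s₁ + 2 * r * s₁ * a := by nlinarith
  have hc₂ : (0:ℝ) < s₂ + 2 * r * s₂ * a := by nlinarith
  have hxc : x / (s₁ + 2 * r * s₁ * a) * (s₁ + 2 * r * s₁ * a) = x :=
    div_mul_cancel₀ x hc₁.ne'
  have hxc2 : x / (s₂ + 2 * r * s₂ * a) * (s₂ + 2 * r * s₂ * a) = x :=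
    div_mul_cancel₀ x hc₂.ne'
  have hxdiv : 0 ≤ x / (s₁ + 2 * r * s₁ * a) := div_nonneg hx0 hc₁.le
  -- τ₂ always lands below 1/2 + ra
  have hτ₂le : x / (s₁ + 2 * r * s₁ * a) + 1 / 2 - 1 / (2 * s₁) ≤ 1 / 2 + r * a := by
    have key : (r * a + 1 / (2 * s₁)) * (s₁ + 2 * r * s₁ * a)
        = r * a * (s₁ + 2 * r * s₁ * a) + 1 / 2 + r * a := by
      field_simp; ring
    have h2 : x / (s₁ + 2 * r * s₁ * a) ≤ r * a + 1 / (2 * s₁) := by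
      rw [div_le_iff₀ hc₁, key]; nlinarith
    linarith
  -- x_i ≤ 1/2 for 1 ≤ i ≤ m
  have hle12 : ∀ i : ℕ, 1 ≤ i → i ≤ m → orbitW s₁ s₂ r a i ≤ 1 / 2 := by
    intro i hi1 hi2
    rcases eq_or_lt_of_le hi2 with h | h
    · rw [h, horbitm]
      have : 0 < 1 / (2 * s₁) := by positivity
      linarith
    · have := horbit i hi1 (by omega)
      exact this.2.le
  refine ⟨?_, ?_, ?_⟩
  · -- part (i)
    intro i hi1 hi2
    obtain ⟨n, rfl⟩ : ∃ n, i = n + 1 := ⟨i - 1, by omega⟩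
    have hrec : orbitW s₁ s₂ r a (n + 1 + 1)
        = (s₁ + 2 * r * s₁ * a) * (orbitW s₁ s₂ r a (n + 1) - 1 / 2 + 1 / (2 * s₁)) := rfl
    simp only [Iint, Set.mem_Icc]
    constructor
    · rintro ⟨hlo, _⟩
      refine ⟨?_, hx1⟩
      rw [hrec]
      nlinarith
    · rintro ⟨hlo, _⟩
      rw [hrec] at hlo
      refine ⟨?_, hτ₂le⟩
      nlinarith
  · -- part (ii)
    simp only [Iint, Set.mem_Icc]
    refine ⟨?_, hτ₂le⟩
    rw [horbitm]
    linarith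
  · -- part (iii)
    intro i hi1 hi2
    simp only [Iint, Set.mem_Icc]
    have hx1val : orbitW s₁ s₂ r a 1
        = (s₂ + 2 * r * s₂ * a) * (1 / 2 + 1 / (2 * s₂) - (1 / 2 + r * a)) := rfl
    have hkey : (s₂ + 2 * r * s₂ * a) * (1 / (2 * s₂)) = 1 / 2 + r * a := by
      field_simp
    have hxi := hle12 i hi1 hi2
    constructor
    · rintro ⟨_, hhi⟩
      refine ⟨?_, hx1⟩
      rw [hx1val]
      -- from τ₃ x ≤ 1/2 + ra : 1/(2s₂) - ra ≤ x / c₂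
      have h2 : (1 / (2 * s₂) - r * a) ≤ x / (s₂ + 2 * r * s₂ * a) := by linarith
      have h3 := mul_le_mul_of_nonneg_right h2 hc₂.le
      rw [hxc2] at h3
      have heq : (s₂ + 2 * r * s₂ * a) * (1 / 2 + 1 / (2 * s₂) - (1 / 2 + r * a))
          = (1 / (2 * s₂) - r * a) * (s₂ + 2 * r * s₂ * a) := by ring
      rw [heq]; exact h3
    · rintro ⟨hlo, _⟩
      rw [hx1val] at hlo
      constructor
      · -- x_i ≤ τ₃ x, since x ≤ 1/2 + ra = c₂/(2s₂) ≤ c₂(1/2 + 1/(2s₂) - x_i)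
        have hnn : 0 ≤ (s₂ + 2 * r * s₂ * a) * (1 / 2 - orbitW s₁ s₂ r a i) :=
          mul_nonneg hc₂.le (by linarith)
        have hexp : (s₂ + 2 * r * s₂ * a) * (1 / 2 + 1 / (2 * s₂) - orbitW s₁ s₂ r a i)
            = (s₂ + 2 * r * s₂ * a) * (1 / (2 * s₂))
              + (s₂ + 2 * r * s₂ * a) * (1 / 2 - orbitW s₁ s₂ r a i) := by ring
        have h1 : x ≤ (1 / 2 + 1 / (2 * s₂) - orbitW s₁ s₂ r a i) * (s₂ + 2 * r * s₂ * a) := by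
          have heq2 : (1 / 2 + 1 / (2 * s₂) - orbitW s₁ s₂ r a i) * (s₂ + 2 * r * s₂ * a)
              = (s₂ + 2 * r * s₂ * a) * (1 / 2 + 1 / (2 * s₂) - orbitW s₁ s₂ r a i) :=
            mul_comm _ _
          rw [heq2, hexp, hkey]; linarith
        have h2 : x / (s₂ + 2 * r * s₂ * a) ≤ 1 / 2 + 1 / (2 * s₂) - orbitW s₁ s₂ r a i :=
          (div_le_iff₀ hc₂).mpr h1
        linarith
      · -- τ₃ x ≤ 1/2 + ra, since x₁ ≤ x
        have h1 : 1 / (2 * s₂) - r * a ≤ x / (s₂ + 2 * r * s₂ * a) := by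
          rw [le_div_iff₀ hc₂,
            show (1 / (2 * s₂) - r * a) * (s₂ + 2 * r * s₂ * a)
              = (s₂ + 2 * r * s₂ * a) * (1 / 2 + 1 / (2 * s₂) - (1 / 2 + r * a)) by ring]
          exact hlo
        linarith
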